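/- Let u : ℝⁿ → ℝ be Lipschitz with constant L. Then the function W̲(x) := inf_{‖v‖=ε} [ α u(x+v) + β ∫ u(x+z) dμ_v(z) ] is Lipschitz on ℝⁿ with Lipschitz constant at most 3L. -/

import Mathlib

/-!
For each direction `v`, the map `x ↦ α u(x+v) + β ∫ u(x+z) dμ_v(z)` is a convex combination of
two translates of `L`-Lipschitz functions (averaging against a measure of mass at most one
preserves the Lipschitz constant), hence is itself `L`-Lipschitz. Since `u` is bounded on
`x + B(0, ε)`, these maps are bounded below at every `x` uniformly in `v`, and the infimum of a
pointwise bounded below family of `L`-Lipschitz real functions is `L`-Lipschitz. So `W̲` is even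
`L`-Lipschitz.
-/

open MeasureTheory Metric Filter Set
open scoped RealInnerProductSpace ENNReal NNReal Topology Classical

noncomputable section

abbrev E (n : ℕ) : Type := EuclideanSpace ℝ (Fin n)

/-- The closed `(n-1)`-dimensional disk of radius `ε` orthogonal to `v`. -/
def diskSet (n : ℕ) (ε : ℝ) (v : E n) : Set (E n) :=
  {z | ⟪z, v⟫ = 0 ∧ ‖z‖ ≤ ε}

/-- The uniform probability measure on `diskSet n ε v`: the `(n-1)`-dimensional
Hausdorff measure restricted to the disk, normalized to total mass 1. -/
def diskMeasure (n : ℕ) (ε : ℝ) (v : E n) : Measure (E n) :=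
  (μH[(n : ℝ) - 1] (diskSet n ε v))⁻¹ • μH[(n : ℝ) - 1].restrict (diskSet n ε v)

/-- `Wfun n ε α β u x v = α u(x+v) + β ∫ u(x+z) dμ_v(z)`. -/
def Wfun (n : ℕ) (ε α β : ℝ) (u : E n → ℝ) (x v : E n) : ℝ :=
  α * u (x + v) + β * ∫ z, u (x + z) ∂(diskMeasure n ε v)

namespace LipschitzWith

variable {X : Type*} [PseudoMetricSpace X] {K : ℝ≥0}

theorem ciInf {ι : Type*} {f : ι → X → ℝ} (hf : ∀ i, LipschitzWith K (f i))
    (hbdd : ∀ x, BddBelow (range fun i => f i x)) : LipschitzWith K fun x => ⨅ i, f i x := by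
  cases isEmpty_or_nonempty ι
  · simpa only [Real.iInf_of_isEmpty] using LipschitzWith.const' (0 : ℝ)
  refine LipschitzWith.of_le_add_mul K fun x y => ?_
  rw [← sub_le_iff_le_add]
  refine le_ciInf fun i => ?_
  calc (⨅ j, f j x) - K * dist x y ≤ f i x - K * dist x y := by gcongr; exact ciInf_le (hbdd x) i
    _ ≤ f i y := by linarith [(hf i).le_add_mul x y]

variable {F : Type*} [SeminormedAddCommGroup F] [NormedSpace ℝ F]

theorem convex_combination {f g : X → F} (hf : LipschitzWith K f) (hg : LipschitzWith K g)
    {α β : ℝ} (hα : 0 ≤ α) (hβ : 0 ≤ β) (hαβ : α + β = 1) :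
    LipschitzWith K fun x => α • f x + β • g x := by
  have hnorm : ‖α‖₊ + ‖β‖₊ = 1 := by
    ext; simp [abs_of_nonneg hα, abs_of_nonneg hβ, hαβ]
  simpa [← add_mul, hnorm] using
    ((lipschitzWith_smul α).comp hf).add ((lipschitzWith_smul β).comp hg)

end LipschitzWith

section Translates

variable {E F : Type*} [SeminormedAddCommGroup E] [NormedAddCommGroup F] {u : E → F} {L : ℝ≥0}

theorem LipschitzWith.norm_comp_add_le (hu : LipschitzWith L u) (x z : E) :
    ‖u (x + z)‖ ≤ ‖u x‖ + L * ‖z‖ :=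
  calc ‖u (x + z)‖ ≤ ‖u x‖ + ‖u (x + z) - u x‖ := norm_le_insert' _ _
    _ ≤ ‖u x‖ + L * ‖z‖ := by
      gcongr
      simpa [dist_eq_norm] using hu.dist_le_mul (x + z) x

variable [NormedSpace ℝ F] [MeasurableSpace E] {μ : Measure E} [IsZeroOrProbabilityMeasure μ]

theorem LipschitzWith.norm_integral_comp_add_le (hu : LipschitzWith L u) (x : E) {r : ℝ}
    (hr : 0 ≤ r) (hμ : ∀ᵐ z ∂μ, ‖z‖ ≤ r) : ‖∫ z, u (x + z) ∂μ‖ ≤ ‖u x‖ + L * r :=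
  calc ‖∫ z, u (x + z) ∂μ‖ ≤ (‖u x‖ + L * r) * μ.real univ :=
        norm_integral_le_of_norm_le_const <| hμ.mono fun z hz =>
          (hu.norm_comp_add_le x z).trans (by gcongr)
    _ ≤ ‖u x‖ + L * r := mul_le_of_le_one_right (by positivity) measureReal_le_one

theorem LipschitzWith.integral_comp_add [OpensMeasurableSpace E]
    [SecondCountableTopologyEither E F] (hu : LipschitzWith L u) :
    LipschitzWith L fun x => ∫ z, u (x + z) ∂μ := by
  have hdiff : ∀ x y z, ‖u (x + z) - u (y + z)‖ ≤ L * dist x y := fun x y z => by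
    simpa [dist_eq_norm] using hu.dist_le_mul (x + z) (y + z)
  -- translates differ by a bounded function, so they are integrable or not all at once
  have hint : ∀ x y, Integrable (fun z => u (x + z)) μ → Integrable (fun z => u (y + z)) μ := by
    intro x y hx
    have hcont := hu.continuous
    have hmeas : AEStronglyMeasurable (fun z => u (y + z) - u (x + z)) μ :=
      (by fun_prop : Continuous fun z => u (y + z) - u (x + z)).aestronglyMeasurable
    exact ((Integrable.of_bound hmeas _ (ae_of_all _ (hdiff y x))).add hx).congr
      (ae_of_all _ fun z => sub_add_cancel _ _)
  refine LipschitzWith.of_dist_le_mul fun x y => ?_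
  by_cases hx : Integrable (fun z => u (x + z)) μ
  · rw [dist_eq_norm, ← integral_sub hx (hint x y hx)]
    calc ‖∫ z, u (x + z) - u (y + z) ∂μ‖ ≤ L * dist x y * μ.real univ :=
          norm_integral_le_of_norm_le_const (ae_of_all _ (hdiff x y))
      _ ≤ L * dist x y := mul_le_of_le_one_right (by positivity) measureReal_le_one
  · rw [integral_undef hx, integral_undef (mt (hint y x) hx), dist_self]
    positivity

end Translates

section Disk

variable {n : ℕ} {ε : ℝ} {v : E n}

theorem isClosed_diskSet : IsClosed (diskSet n ε v) :=
  (isClosed_eq (by fun_prop) continuous_const).inter (isClosed_le continuous_norm continuous_const)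

-- `diskMeasure` is the conditional measure `μH[|diskSet]`, which degenerates to `0` when the
-- disk has Hausdorff measure `0` or `∞`.
instance : IsZeroOrProbabilityMeasure (diskMeasure n ε v) :=
  inferInstanceAs (IsZeroOrProbabilityMeasure (ProbabilityTheory.cond _ _))

theorem ae_diskMeasure_norm_le : ∀ᵐ z ∂(diskMeasure n ε v), ‖z‖ ≤ ε :=
  (ProbabilityTheory.ae_cond_mem isClosed_diskSet.measurableSet).mono fun _ hz => hz.2

variable {α β : ℝ} (hα : 0 ≤ α) (hβ : 0 ≤ β) (hαβ : α + β = 1) {u : E n → ℝ} {L : ℝ≥0}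
  (hu : LipschitzWith L u)
include hα hβ hαβ hu

theorem lipschitzWith_Wfun : LipschitzWith L fun x => Wfun n ε α β u x v := by
  have hu_v : LipschitzWith L fun x => u (x + v) :=
    (hu.comp (isometry_add_right v).lipschitz).weaken (mul_one L).le
  exact hu_v.convex_combination hu.integral_comp_add hα hβ hαβ

theorem abs_Wfun_le (x : E n) (hv : ‖v‖ = ε) : |Wfun n ε α β u x v| ≤ |u x| + L * ε := by
  have hu_v : |u (x + v)| ≤ |u x| + L * ε := by
    simpa [hv] using hu.norm_comp_add_le x v
  have hu_int : |∫ z, u (x + z) ∂(diskMeasure n ε v)| ≤ |u x| + L * ε := by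
    simpa using hu.norm_integral_comp_add_le x (by rw [← hv]; positivity) ae_diskMeasure_norm_le
  calc |Wfun n ε α β u x v|
      ≤ |α * u (x + v)| + |β * ∫ z, u (x + z) ∂(diskMeasure n ε v)| := abs_add_le _ _
    _ = α * |u (x + v)| + β * |∫ z, u (x + z) ∂(diskMeasure n ε v)| := by
        rw [abs_mul, abs_mul, abs_of_nonneg hα, abs_of_nonneg hβ]
    _ ≤ α * (|u x| + L * ε) + β * (|u x| + L * ε) := by gcongr
    _ = |u x| + L * ε := by rw [← add_mul, hαβ, one_mul]

end Disk

theorem stmt_2_general (n : ℕ) (ε : ℝ)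
    (α β : ℝ) (hα : 0 ≤ α) (hβ : 0 ≤ β) (hαβ : α + β = 1)
    (u : E n → ℝ) (L : ℝ≥0) (hu : LipschitzWith L u) :
    LipschitzWith (3 * L)
      (fun x => ⨅ v : sphere (0 : E n) ε, Wfun n ε α β u x (v : E n)) := by
  have hbdd (x : E n) : BddBelow (range fun v : sphere (0 : E n) ε => Wfun n ε α β u x v) := by
    refine ⟨-(|u x| + L * ε), ?_⟩
    rintro _ ⟨v, rfl⟩
    exact neg_le_of_abs_le (abs_Wfun_le hα hβ hαβ hu x (norm_eq_of_mem_sphere v))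
  have hW := LipschitzWith.ciInf (fun _ => lipschitzWith_Wfun hα hβ hαβ hu) hbdd
  exact hW.weaken (le_mul_of_one_le_left (by positivity) (by norm_num))

theorem stmt_2 (n : ℕ) (hn : 2 ≤ n) (ε : ℝ) (hε : 0 < ε)
    (α β : ℝ) (hα : 0 ≤ α) (hβ : 0 ≤ β) (hαβ : α + β = 1)
    (u : E n → ℝ) (L : ℝ≥0) (hu : LipschitzWith L u) :
    LipschitzWith (3 * L)
      (fun x => ⨅ v : sphere (0 : E n) ε, Wfun n ε α β u x (v : E n)) :=
  stmt_2_general n ε α β hα hβ hαβ u L hu
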